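/- Every arboreal truncation of a simple graph X with no isolated vertices is class I, where an arboreal truncation is a generalized truncation in which every constituent graph con(v) is a forest. -/

import Mathlib

open SimpleGraph

/-- A proper edge coloring of a simple graph: distinct edges sharing a vertex
receive distinct colors. -/
def IsProperEdgeColoring {V α : Type*} (G : SimpleGraph V) (C : Sym2 V → α) : Prop :=
  ∀ e₁ ∈ G.edgeSet, ∀ e₂ ∈ G.edgeSet, e₁ ≠ e₂ → (∃ v, v ∈ e₁ ∧ v ∈ e₂) → C e₁ ≠ C e₂

/-- The chromatic index: least number of colors admitting a proper edge coloring. -/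
noncomputable def chromIndex {V : Type*} (G : SimpleGraph V) : ℕ :=
  sInf {k | ∃ C : Sym2 V → Fin k, IsProperEdgeColoring G C}

/-- Degree of a vertex. -/
noncomputable def deg {V : Type*} (G : SimpleGraph V) (v : V) : ℕ :=
  (G.neighborSet v).ncard

/-- Maximum degree. -/
noncomputable def maxDeg {V : Type*} (G : SimpleGraph V) : ℕ :=
  sSup (Set.range (deg G))

/-- A graph is class I if its chromatic index equals its maximum degree. -/
def ClassI {V : Type*} (G : SimpleGraph V) : Prop := chromIndex G = maxDeg G

/-- The sun over `G`: attach one pendant edge at each vertex of `G`. -/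
def sun {V : Type*} (G : SimpleGraph V) : SimpleGraph (V ⊕ V) :=
  SimpleGraph.fromRel (fun x y =>
    (∃ u v, G.Adj u v ∧ x = Sum.inl u ∧ y = Sum.inl v) ∨
    (∃ v, x = Sum.inl v ∧ y = Sum.inr v))

/-- The pendant edge of the sun attached at vertex `v`. -/
def pendant {V : Type*} (v : V) : Sym2 (V ⊕ V) := s(Sum.inl v, Sum.inr v)

/-- The generalized truncation of `X` determined by the graph `H` on the darts of `X`:
each dart is joined to its reverse dart (the matching `M_F`) and the edges of `H`
(the constituent edges) are added. -/
def trunc {V : Type*} (X : SimpleGraph V) (H : SimpleGraph X.Dart) : SimpleGraph X.Dart :=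
  SimpleGraph.fromRel (fun d d' => d' = d.symm ∨ H.Adj d d')

/-- The constituent graph `H` respects clusters: its edges join only darts with the
same initial vertex. -/
def RespectsClusters {V : Type*} (X : SimpleGraph V) (H : SimpleGraph X.Dart) : Prop :=
  ∀ d d' : X.Dart, H.Adj d d' → d.toProd.1 = d'.toProd.1

/-- The cluster at `v`: darts with initial vertex `v`. -/
def cluster {V : Type*} (X : SimpleGraph V) (v : V) : Set X.Dart :=
  {d : X.Dart | d.toProd.1 = v}

/-- The constituent at `v`, as a graph in its own right. -/
def constituent {V : Type*} (X : SimpleGraph V) (H : SimpleGraph X.Dart) (v : V) :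
    SimpleGraph (cluster X v) := H.induce (cluster X v)

/-- The complete truncation: every constituent is the complete graph on its cluster. -/
def completeTrunc {V : Type*} (X : SimpleGraph V) : SimpleGraph X.Dart :=
  trunc X (SimpleGraph.fromRel (fun d d' => d.toProd.1 = d'.toProd.1))

/-- `X` has no isolated vertices. -/
def NoIsolated {V : Type*} (X : SimpleGraph V) : Prop := ∀ v : V, ∃ w, X.Adj v w

/-- The number of edges of `X` of color `k` incident with `v`. -/
noncomputable def colorCountAt {V α : Type*} (X : SimpleGraph V) (c : Sym2 V → α)
    (v : V) (k : α) : ℕ :=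
  {e | e ∈ X.edgeSet ∧ v ∈ e ∧ c e = k}.ncard

/-- An edge coloring (not necessarily proper) is parity-balanced if for every vertex `v`
and every color `k`, the number of edges of color `k` incident with `v` has the same
parity as the degree of `v`. -/
def ParityBalanced {V : Type*} {m : ℕ} (X : SimpleGraph V) (c : Sym2 V → Fin m) : Prop :=
  ∀ (v : V) (k : Fin m), colorCountAt X c v k % 2 = deg X v % 2

/-- The edges of the sun centered at the constituent at `v`: the constituent edges
at `v` together with the matching edges incident with the cluster at `v`. -/
def sunEdges {V : Type*} (X : SimpleGraph V) (H : SimpleGraph X.Dart) (v : V) :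
    Set (Sym2 X.Dart) :=
  {e | e ∈ (trunc X H).edgeSet ∧ ∃ d : X.Dart, d ∈ e ∧ d.toProd.1 = v}

/-- `H` describes a cyclic truncation of `X`: it respects clusters and every
constituent is a cycle on its cluster. -/
def CyclicConstituents {V : Type*} (X : SimpleGraph V) (H : SimpleGraph X.Dart) : Prop :=
  RespectsClusters X H ∧ (∀ d : X.Dart, deg H d = 2) ∧
    ∀ v : V, (constituent X H v).Connected

/-!
A constituent edge joins two darts of the same cluster, so every cycle of the constituent
graph `H` lies inside one cluster; as the constituents are forests, `H` is a forest. Each dart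
has exactly one more neighbor in `TR(X)` than in `H`, its reverse dart, so `H` has maximum
degree at most `Δ - 1`, where `Δ = Δ(TR(X))`. A finite forest of maximum degree at most `k` has
a proper edge coloring with `k` colors: delete a leaf edge, color the rest by induction, and give
the leaf edge a color missing at its inner end, where at most `k - 1` colors occur. Coloring `H`
with `1, …, Δ - 1` and the matching `M_F` with `0` gives a proper coloring of `TR(X)` with `Δ`
colors.
-/

namespace SimpleGraph

variable {V : Type*} {G : SimpleGraph V}

lemma IsAcyclic.exists_adj_forall_adj_eq [Finite V] (hG : G.IsAcyclic) {x y : V}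
    (hxy : G.Adj x y) : ∃ a c, G.Adj a c ∧ ∀ w, G.Adj a w → w = c := by
  have : Nonempty V := ⟨x⟩
  obtain ⟨u, v, p, hp, hmax⟩ := Walk.exists_isPath_forall_isPath_length_le_length G
  have hnil : ¬p.Nil := fun h => by
    simpa [Walk.length_eq_zero_iff.mpr h] using hmax x y (.cons hxy .nil) (by simp [hxy.ne])
  refine ⟨u, p.snd, p.adj_snd hnil, fun w hw => hG.eq_snd_of_adj_start hp hw ?_⟩
  by_contra hwp
  simpa using hmax w v (p.cons hw.symm) (hp.cons hwp)

lemma ncard_incidenceSet (v : V) : (G.incidenceSet v).ncard = deg G v := by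
  classical
  rw [← Nat.card_coe_set_eq, Nat.card_congr (G.incidenceSetEquivNeighborSet v),
    Nat.card_coe_set_eq, deg]

end SimpleGraph

open SimpleGraph

section EdgeColoring

variable {V α : Type*} {G : SimpleGraph V}

lemma IsProperEdgeColoring.update_deleteEdges [DecidableEq V] {C : Sym2 V → α} {a c : V} {x : α}
    (hC : IsProperEdgeColoring (G.deleteEdges {s(a, c)}) C)
    (ha : x ∉ C '' (G.deleteEdges {s(a, c)}).incidenceSet a)
    (hc : x ∉ C '' (G.deleteEdges {s(a, c)}).incidenceSet c) :
    IsProperEdgeColoring G (Function.update C s(a, c) x) := by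
  have hfresh :
      ∀ e ∈ G.edgeSet, e ≠ s(a, c) → (∃ v, v ∈ s(a, c) ∧ v ∈ e) → C e ≠ x := by
    rintro e he hne ⟨v, hv, hve⟩ rfl
    have he' : e ∈ (G.deleteEdges {s(a, c)}).edgeSet := by
      rw [edgeSet_deleteEdges]; exact ⟨he, hne⟩
    rcases Sym2.mem_iff.mp hv with rfl | rfl
    · exact ha ⟨e, ⟨he', hve⟩, rfl⟩
    · exact hc ⟨e, ⟨he', hve⟩, rfl⟩
  intro e₁ h₁ e₂ h₂ hne hshare
  by_cases q₁ : e₁ = s(a, c) <;> by_cases q₂ : e₂ = s(a, c)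
  · exact absurd (q₁.trans q₂.symm) hne
  · subst q₁
    simpa [q₂] using (hfresh e₂ h₂ q₂ hshare).symm
  · subst q₂
    obtain ⟨v, hv₁, hv₂⟩ := hshare
    simpa [q₁] using hfresh e₁ h₁ q₁ ⟨v, hv₂, hv₁⟩
  · simp only [Function.update_of_ne q₁, Function.update_of_ne q₂]
    exact hC e₁ (by simp [edgeSet_deleteEdges, h₁, q₁]) e₂
      (by simp [edgeSet_deleteEdges, h₂, q₂]) hne hshare

lemma deg_mono [Finite V] {G' : SimpleGraph V} (h : G ≤ G') (v : V) : deg G v ≤ deg G' v :=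
  Set.ncard_le_ncard (fun _ hw => h hw)

theorem SimpleGraph.IsAcyclic.exists_isProperEdgeColoring [Finite V] (hG : G.IsAcyclic) {k : ℕ}
    (hdeg : ∀ v, deg G v ≤ k) :
    ∃ C : Sym2 V → ℕ, IsProperEdgeColoring G C ∧ ∀ e ∈ G.edgeSet, C e < k := by
  classical
  induction hn : G.edgeSet.ncard generalizing G with
  | zero =>
    have hE : G.edgeSet = ∅ := (Set.ncard_eq_zero (Set.toFinite _)).mp hn
    exact ⟨0, fun e he => by simp [hE] at he, fun e he => by simp [hE] at he⟩
  | succ n ih =>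
    obtain ⟨e, he⟩ := Set.nonempty_of_ncard_ne_zero (s := G.edgeSet) (by omega)
    induction e using Sym2.ind with | _ u w => ?_
    obtain ⟨a, c, hac, hleaf⟩ := hG.exists_adj_forall_adj_eq (G.mem_edgeSet.mp he)
    set G' := G.deleteEdges {s(a, c)}
    have hG'n : G'.edgeSet.ncard = n := by
      rw [edgeSet_deleteEdges, Set.ncard_sdiff_singleton_of_mem (G.mem_edgeSet.mpr hac)]; omega
    obtain ⟨C, hC, hCk⟩ := ih (hG.anti (deleteEdges_le _))
      (fun v => (deg_mono (deleteEdges_le _) v).trans (hdeg v)) hG'n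
    have hinc_a : G'.incidenceSet a = ∅ := by
      refine Set.eq_empty_of_forall_notMem fun e ⟨he, hae⟩ => ?_
      obtain ⟨w, rfl⟩ := Sym2.mem_iff_exists.mp hae
      rw [edgeSet_deleteEdges] at he
      exact he.2 (by simp [hleaf w he.1])
    have hdeg_c : deg G' c < deg G c := by
      refine Set.ncard_lt_ncard ((Set.ssubset_iff_of_subset ?_).mpr ⟨a, hac.symm, ?_⟩)
      · exact fun _ hw => deleteEdges_le _ hw
      · simp [G', Sym2.eq_swap]
    have hused_c : (C '' G'.incidenceSet c).ncard < (Set.Iio k).ncard := by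
      calc (C '' G'.incidenceSet c).ncard ≤ (G'.incidenceSet c).ncard := Set.ncard_image_le
        _ = deg G' c := ncard_incidenceSet c
        _ < k := hdeg_c.trans_le (hdeg c)
        _ = (Set.Iio k).ncard := (Set.ncard_Iio_nat k).symm
    obtain ⟨x, hxk, hx⟩ := Set.exists_mem_notMem_of_ncard_lt_ncard hused_c
    have hx_a : x ∉ C '' G'.incidenceSet a := by simp [hinc_a]
    refine ⟨Function.update C s(a, c) x, hC.update_deleteEdges hx_a hx, ?_⟩
    intro e he
    by_cases q : e = s(a, c)
    · simpa [q] using hxk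
    · simpa [q] using hCk e (by simp [edgeSet_deleteEdges, he, q])

end EdgeColoring

section ChromaticIndex

variable {V : Type*} {G : SimpleGraph V}

lemma deg_le_of_isProperEdgeColoring {k : ℕ} {C : Sym2 V → Fin k}
    (hC : IsProperEdgeColoring G C) (v : V) : deg G v ≤ k := by
  have hinj : Function.Injective (fun w : G.neighborSet v => C s(v, w)) := by
    rintro ⟨w₁, h₁⟩ ⟨w₂, h₂⟩ heq
    by_contra hne
    exact hC _ h₁ _ h₂ (fun h => hne (Subtype.ext (Sym2.congr_right.mp h)))
      ⟨v, Sym2.mem_mk_left _ _, Sym2.mem_mk_left _ _⟩ heq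
  simpa [deg] using Nat.card_le_card_of_injective _ hinj

lemma deg_le_maxDeg [Finite V] (v : V) : deg G v ≤ maxDeg G :=
  le_csSup (Set.finite_range _).bddAbove ⟨v, rfl⟩

lemma classI_of_isProperEdgeColoring {k : ℕ} {C : Sym2 V → Fin k}
    (hC : IsProperEdgeColoring G C) (hk : k ≤ maxDeg G) : ClassI G := by
  have hkmem : k ∈ {k | ∃ C : Sym2 V → Fin k, IsProperEdgeColoring G C} := ⟨C, hC⟩
  refine le_antisymm ((Nat.sInf_le hkmem).trans hk) (le_csInf ⟨k, hkmem⟩ fun b hb => ?_)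
  obtain ⟨C', hC'⟩ := hb
  exact csSup_le' (by rintro _ ⟨v, rfl⟩; exact deg_le_of_isProperEdgeColoring hC' v)

end ChromaticIndex

section Truncation

variable {V : Type*} {X : SimpleGraph V} {H : SimpleGraph X.Dart}

lemma trunc_adj {d d' : X.Dart} : (trunc X H).Adj d d' ↔ d' = d.symm ∨ H.Adj d d' := by
  simp only [trunc, fromRel_adj]
  constructor
  · rintro ⟨-, (h | h) | (rfl | h)⟩
    · exact .inl h
    · exact .inr h
    · exact .inl (Dart.symm_symm _).symm
    · exact .inr h.symm
  · rintro (rfl | h)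
    · exact ⟨(Dart.symm_ne d).symm, .inl (.inl rfl)⟩
    · exact ⟨h.ne, .inl (.inr h)⟩

lemma sym2_mk_symm_eq_of_mem {d w : X.Dart} (hw : w ∈ s(d, d.symm)) :
    s(d, d.symm) = s(w, w.symm) := by
  rcases Sym2.mem_iff.mp hw with rfl | rfl
  · rfl
  · rw [Dart.symm_symm, Sym2.eq_swap]

lemma exists_isProperEdgeColoring_trunc {k : ℕ} {C : Sym2 X.Dart → ℕ}
    (hC : IsProperEdgeColoring H C) (hCk : ∀ e ∈ H.edgeSet, C e < k) :
    ∃ C' : Sym2 X.Dart → Fin (k + 1), IsProperEdgeColoring (trunc X H) C' := by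
  classical
  have hmatching :
      ∀ e ∈ (trunc X H).edgeSet, e ∉ H.edgeSet → ∃ d : X.Dart, e = s(d, d.symm) := by
    intro e
    induction e using Sym2.ind with | _ d d' => ?_
    intro he hH
    rcases trunc_adj.mp he with h | h
    · exact ⟨d, by simp only at h; rw [h]⟩
    · exact absurd h hH
  refine ⟨fun e => if h : e ∈ H.edgeSet then (⟨C e, hCk e h⟩ : Fin k).succ else 0, ?_⟩
  intro e₁ h₁ e₂ h₂ hne hshare
  by_cases q₁ : e₁ ∈ H.edgeSet <;> by_cases q₂ : e₂ ∈ H.edgeSet <;>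
    simp only [q₁, q₂, dite_true, dite_false, ne_eq, Fin.succ_inj, Fin.mk.injEq]
  · exact hC e₁ q₁ e₂ q₂ hne hshare
  · exact Fin.succ_ne_zero _
  · exact (Fin.succ_ne_zero _).symm
  · obtain ⟨d₁, rfl⟩ := hmatching e₁ h₁ q₁
    obtain ⟨d₂, rfl⟩ := hmatching e₂ h₂ q₂
    obtain ⟨w, hw₁, hw₂⟩ := hshare
    exact absurd ((sym2_mk_symm_eq_of_mem hw₁).trans (sym2_mk_symm_eq_of_mem hw₂).symm) hne

namespace RespectsClusters

lemma not_adj_symm (hH : RespectsClusters X H) (d : X.Dart) : ¬H.Adj d d.symm := fun h =>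
  d.adj.ne (hH d d.symm h)

lemma deg_trunc [Finite X.Dart] (hH : RespectsClusters X H) (d : X.Dart) :
    deg (trunc X H) d = deg H d + 1 := by
  have hnbr : (trunc X H).neighborSet d = insert d.symm (H.neighborSet d) := by
    ext; simp [trunc_adj]
  rw [deg, hnbr, Set.ncard_insert_of_notMem (s := H.neighborSet d) (hH.not_adj_symm d)]
  rfl

lemma mem_cluster_of_mem_support (hH : RespectsClusters X H) {u v : X.Dart} (p : H.Walk u v) :
    ∀ w ∈ p.support, w ∈ cluster X u.fst := by
  induction p with
  | nil => simp [cluster]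
  | cons h p ih =>
    intro w hw
    rcases List.mem_cons.mp (Walk.support_cons h p ▸ hw) with rfl | hw
    · rfl
    · exact (ih w hw).trans (hH _ _ h).symm

lemma isAcyclic (hH : RespectsClusters X H) (hforest : ∀ v, (constituent X H v).IsAcyclic) :
    H.IsAcyclic := fun _ c hc =>
  hforest _ (c.induce _ (hH.mem_cluster_of_mem_support c))
    (Walk.IsCycle.of_map (f := (Embedding.induce _).toHom) (by rwa [Walk.map_induce]))

end RespectsClusters

end Truncation

theorem stmt15_general {V : Type*} [Fintype V] (X : SimpleGraph V)
    (H : SimpleGraph X.Dart) (hH : RespectsClusters X H)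
    (hforest : ∀ v : V, (constituent X H v).IsAcyclic) :
    ClassI (trunc X H) := by
  have : Finite X.Dart := Finite.of_injective _ Dart.toProd_injective
  -- With no darts `maxDeg = 0`, and the `Δ - 1 + 1` colors used below would be one too many.
  rcases isEmpty_or_nonempty X.Dart with hD | ⟨⟨d₀⟩⟩
  · exact classI_of_isProperEdgeColoring (k := 0) (C := isEmptyElim) (fun e => isEmptyElim e)
      (Nat.zero_le _)
  have hdeg : ∀ d, deg H d + 1 ≤ maxDeg (trunc X H) := fun d =>
    hH.deg_trunc d ▸ deg_le_maxDeg d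
  obtain ⟨C, hC, hCk⟩ := (hH.isAcyclic hforest).exists_isProperEdgeColoring
    (k := maxDeg (trunc X H) - 1) fun d => by have := hdeg d; omega
  obtain ⟨C', hC'⟩ := exists_isProperEdgeColoring_trunc hC hCk
  exact classI_of_isProperEdgeColoring hC' (by have := hdeg d₀; omega)

/-- every arboreal truncation is class I. -/
theorem stmt15 {V : Type*} [Fintype V] (X : SimpleGraph V) (hX : NoIsolated X)
    (H : SimpleGraph X.Dart) (hH : RespectsClusters X H)
    (hforest : ∀ v : V, (constituent X H v).IsAcyclic) :
    ClassI (trunc X H) :=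
  stmt15_general X H hH hforest
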